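/- Let G be a finitely generated group with Cayley graph Γ, and H ≤ G. A subset X of G is H-almost invariant (HX = X and Xg H-almost equal to X for all g) if and only if HX = X and ∂X is H-finite, where ∂X = {x ∈ X : ∃ x' ∉ X adjacent to x in Γ}. -/

import Mathlib

open scoped Pointwise

/-- A subset `A` of `G` is `H`-finite if it is contained in finitely many
right cosets `Hg` of the subgroup `H`. -/
def HFinite {G : Type*} [Group G] (H : Subgroup G) (A : Set G) : Prop :=
  ∃ F : Finset G, A ⊆ ⋃ g ∈ F, ((H : Set G) * {g} : Set G)

/-- The boundary of `X` with respect to the generating set `S`. -/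
def bdry {G : Type*} [Group G] (S : Set G) (X : Set G) : Set G :=
  {x ∈ X | ∃ s ∈ S, x * s ∉ X}
/-
The elements `g` for which `X ∆ Xg` is `H`-finite form a subgroup, since
`X ∆ Xab ⊆ (X ∆ Xb) ∪ (X ∆ Xa)b` and `X ∆ Xa⁻¹ = (X ∆ Xa)a⁻¹`, and `H`-finiteness is preserved by
finite unions and right translations. For a symmetric generating set, `X ∆ Xs` is covered by
`∂X ∪ (∂X)s`, and conversely `∂X` is covered by the finitely many `X ∆ Xs⁻¹`, `s ∈ S`.
-/

open scoped symmDiff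

section

variable {G : Type*} [Group G]

lemma Set.mul_singleton_mul_singleton (A : Set G) (a b : G) : A * {a} * {b} = A * {a * b} := by
  rw [mul_assoc, Set.singleton_mul_singleton]

lemma Set.symmDiff_mul_singleton (A B : Set G) (g : G) :
    (A ∆ B) * {g} = (A * {g}) ∆ (B * {g}) := by
  simp only [Set.mul_singleton]
  exact Set.image_symmDiff (mul_left_injective g) A B

namespace HFinite

variable {H : Subgroup G} {A B : Set G}

lemma empty : HFinite H (∅ : Set G) := ⟨∅, Set.empty_subset _⟩

lemma mono (hAB : A ⊆ B) (hB : HFinite H B) : HFinite H A :=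
  let ⟨F, hF⟩ := hB
  ⟨F, hAB.trans hF⟩

lemma union (hA : HFinite H A) (hB : HFinite H B) : HFinite H (A ∪ B) := by
  classical
  obtain ⟨F₁, h₁⟩ := hA
  obtain ⟨F₂, h₂⟩ := hB
  exact ⟨F₁ ∪ F₂, by rw [Finset.set_biUnion_union]; exact Set.union_subset_union h₁ h₂⟩

lemma mul_singleton (g : G) (hA : HFinite H A) : HFinite H (A * {g}) := by
  classical
  obtain ⟨F, hF⟩ := hA
  refine ⟨F.image (· * g), ?_⟩
  rw [Finset.set_biUnion_finset_image]
  calc A * {g} ⊆ (⋃ f ∈ F, (H : Set G) * {f}) * {g} := Set.mul_subset_mul_right hF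
    _ = ⋃ f ∈ F, (H : Set G) * {f * g} := by
      simp only [Set.iUnion₂_mul, Set.mul_singleton_mul_singleton]

lemma biUnion {ι : Type*} {T : Set ι} (hT : T.Finite) {f : ι → Set G}
    (h : ∀ i ∈ T, HFinite H (f i)) : HFinite H (⋃ i ∈ T, f i) := by
  induction T, hT using Set.Finite.induction_on with
  | empty => simpa using empty
  | @insert i T _ _ ih =>
    rw [Set.biUnion_insert]
    exact (h i (Set.mem_insert i T)).union (ih fun j hj => h j (Set.mem_insert_of_mem i hj))

end HFinite

def almostStabilizer (H : Subgroup G) (X : Set G) : Subgroup G where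
  carrier := {g | HFinite H (X ∆ (X * {g}))}
  one_mem' := by simpa using HFinite.empty
  mul_mem' {a b} ha hb := by
    have hsub : X ∆ (X * {a * b}) ⊆ X ∆ (X * {b}) ∪ (X ∆ (X * {a})) * {b} := by
      rw [Set.symmDiff_mul_singleton, Set.mul_singleton_mul_singleton]
      exact symmDiff_triangle (a := X) (b := X * {b}) (c := X * {a * b})
    exact (HFinite.union hb (ha.mul_singleton b)).mono hsub
  inv_mem' {a} ha := by
    have heq : X ∆ (X * {a⁻¹}) = (X ∆ (X * {a})) * {a⁻¹} := by
      rw [Set.symmDiff_mul_singleton, Set.mul_singleton_mul_singleton, mul_inv_cancel,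
        Set.singleton_one, mul_one, symmDiff_comm]
    change HFinite H (X ∆ (X * {a⁻¹}))
    rw [heq]
    exact ha.mul_singleton a⁻¹

lemma mem_almostStabilizer {H : Subgroup G} {X : Set G} {g : G} :
    g ∈ almostStabilizer H X ↔ HFinite H (X ∆ (X * {g})) := Iff.rfl

variable {S X : Set G}

lemma bdry_eq_biUnion_diff : bdry S X = ⋃ s ∈ S, X \ (X * {s⁻¹}) := by
  ext x
  simp [bdry]

lemma diff_mul_singleton_subset_bdry {s : G} (hs : s⁻¹ ∈ S) : X \ (X * {s}) ⊆ bdry S X := by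
  rw [bdry_eq_biUnion_diff]
  simpa using Set.subset_biUnion_of_mem (u := fun s => X \ (X * {s⁻¹})) hs

lemma symmDiff_mul_singleton_subset_bdry (hS : ∀ s ∈ S, s⁻¹ ∈ S) {s : G} (hs : s ∈ S) :
    X ∆ (X * {s}) ⊆ bdry S X ∪ bdry S X * {s} := by
  have hright : (X * {s}) \ X = (X \ (X * {s⁻¹})) * {s} := by
    ext x
    simp
  rw [Set.symmDiff_def, hright]
  exact Set.union_subset_union (diff_mul_singleton_subset_bdry (hS s hs))
    (Set.mul_subset_mul_right (diff_mul_singleton_subset_bdry (by simpa using hs)))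

end

/-- Cohen's characterization of `H`-almost invariant sets. -/
theorem almostInv_iff_bdry_HFinite {G : Type*} [Group G] (S : Set G)
    (hSfin : S.Finite) (hSsymm : ∀ s ∈ S, s⁻¹ ∈ S)
    (hSgen : Subgroup.closure S = (⊤ : Subgroup G))
    (H : Subgroup G) (X : Set G) :
    ((H : Set G) * X = X ∧
        ∀ g : G, HFinite H ((X \ ((X * {g} : Set G))) ∪ (((X * {g} : Set G)) \ X))) ↔
      ((H : Set G) * X = X ∧ HFinite H (bdry S X)) := by
  refine and_congr_right fun _ => ⟨fun hX => ?_, fun hbdry g => ?_⟩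
  · rw [bdry_eq_biUnion_diff]
    exact HFinite.biUnion hSfin fun s _ => (hX s⁻¹).mono Set.subset_union_left
  · have hS : S ⊆ almostStabilizer H X := fun s hs =>
      (hbdry.union (hbdry.mul_singleton s)).mono (symmDiff_mul_singleton_subset_bdry hSsymm hs)
    have hg : g ∈ Subgroup.closure S := hSgen ▸ Subgroup.mem_top g
    exact mem_almostStabilizer.1 ((Subgroup.closure_le _).2 hS hg)
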